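/- arXiv:1903.11680 — 2 statements merged into one kernel-verified Lean document; each statement's English description precedes it below -/
import Mathlib

section
/- In the setting of the preceding gradient-descent theorem (f: R^p → R^n differentiable with Jacobian J(θ); subspace S_+ with complement S_−; α ≤ ‖J(θ)ᵀv‖₂ ≤ β for unit v ∈ S_+ and J(θ)ᵀw = 0 for w ∈ S_− over the ball of radius 4‖r_0‖₂/α around θ_0; ‖J(θ_2) − J(θ_1)‖ ≤ L‖θ_2 − θ_1‖₂; f(θ_0) − ỹ ∈ S_+; step size η ≤ (1/(2β²))·min(1, αβ/(L‖r_0‖₂))), assume additionally that the corruption e = y − ỹ has at most s nonzero entries and that S_+ is γ-diffused, i.e. ‖v‖_∞ ≤ √(γ/n)·‖v‖₂ for every v ∈ S_+. Then after τ ≥ (5/(ηα²))·log(‖r_0‖₂/‖Π_{S_+}(e)‖_∞) iterations, the iterate satisfies ‖f(θ_τ) − ỹ‖_∞ ≤ 2‖Π_{S_+}(e)‖_∞ ≤ (2γ√s/n)·‖e‖₂. -/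
open MeasureTheory Metric

noncomputable section

/-- Entrywise sup norm on Euclidean space. -/
def linfE {n : ℕ} (v : EuclideanSpace ℝ (Fin n)) : ℝ := ⨆ i, |v i|

/-!
Write `e = y - ỹ` and `a = Π_{S₊} e`. Since `e - a ∈ S₊ᗮ` is invisible to every `J(θ)ᵀ`, gradient
descent towards `y` is gradient descent towards the shifted target `b = ỹ + a`, whose initial
residual lies in `S₊` and has norm at most `‖r₀‖`. On `S₊` the Jacobian is well conditioned, so
each step contracts `‖f(θ) - b‖` by `1 - ηα²/4` while the distance travelled is paid for by the
decrease of the residual; this keeps the iterates in the ball where the hypotheses hold. After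
the stated number of steps `‖f(θ_τ) - b‖ ≤ ‖a‖_∞`, hence `‖f(θ_τ) - ỹ‖_∞ ≤ 2‖a‖_∞`. Finally
`‖a‖₂² = ⟪a, e⟫ ≤ ‖a‖_∞ ‖e‖₁ ≤ √(γ/n) ‖a‖₂ · √s ‖e‖₂` by diffusedness and sparsity.
-/

open scoped RealInnerProductSpace

theorem sum_abs_le_sqrt_card_support_mul_norm {ι : Type*} [Fintype ι] (e : EuclideanSpace ℝ ι)
    {s : ℕ} (hs : (Finset.univ.filter fun i => e i ≠ 0).card ≤ s) :
    ∑ i, |e i| ≤ √s * ‖e‖ := by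
  set T := Finset.univ.filter fun i => e i ≠ 0
  have hsupp : ∑ i, |e i| = ∑ i ∈ T, 1 * |e i| := by
    simp only [one_mul, T]
    exact (Finset.sum_filter_of_ne fun i _ h => by simpa using h).symm
  calc ∑ i, |e i| = ∑ i ∈ T, 1 * |e i| := hsupp
    _ ≤ √(∑ i ∈ T, 1 ^ 2) * √(∑ i ∈ T, |e i| ^ 2) := Real.sum_mul_le_sqrt_mul_sqrt _ _ _
    _ ≤ √s * ‖e‖ := by
      rw [EuclideanSpace.norm_eq]
      gcongr
      · simpa using hs
      · exact Finset.sum_le_univ_sum_of_nonneg fun i => by positivity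

namespace linfE

variable {n : ℕ}

theorem abs_apply_le (v : EuclideanSpace ℝ (Fin n)) (i : Fin n) : |v i| ≤ linfE v :=
  le_ciSup (f := fun j => |v j|) (Set.finite_range _).bddAbove i

theorem nonneg (v : EuclideanSpace ℝ (Fin n)) : 0 ≤ linfE v :=
  Real.iSup_nonneg fun _ => abs_nonneg _

theorem le_norm (v : EuclideanSpace ℝ (Fin n)) : linfE v ≤ ‖v‖ :=
  Real.iSup_le (fun i => by simpa using PiLp.norm_apply_le v i) (norm_nonneg v)

theorem add_le (u v : EuclideanSpace ℝ (Fin n)) : linfE (u + v) ≤ linfE u + linfE v :=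
  Real.iSup_le
    (fun i => (abs_add_le (u i) (v i)).trans (add_le_add (abs_apply_le u i) (abs_apply_le v i)))
    (add_nonneg (nonneg u) (nonneg v))

theorem inner_le_mul_sum_abs (u v : EuclideanSpace ℝ (Fin n)) :
    ⟪u, v⟫ ≤ linfE u * ∑ i, |v i| := by
  rw [Finset.mul_sum, PiLp.inner_apply]
  refine Finset.sum_le_sum fun i _ => ?_
  calc ⟪u i, v i⟫ ≤ ‖u i‖ * ‖v i‖ := real_inner_le_norm (u i) (v i)
    _ ≤ linfE u * ‖v i‖ := mul_le_mul_of_nonneg_right (abs_apply_le u i) (norm_nonneg _)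
    _ = linfE u * |v i| := by rw [Real.norm_eq_abs]

theorem starProjection_le_mul_sum_abs (K : Submodule ℝ (EuclideanSpace ℝ (Fin n))) {c : ℝ}
    (hc : 0 ≤ c) (hK : ∀ u ∈ K, linfE u ≤ √c * ‖u‖) (e : EuclideanSpace ℝ (Fin n)) :
    linfE (K.starProjection e) ≤ c * ∑ i, |e i| := by
  set a := K.starProjection e
  have ha : a ∈ K := K.starProjection_apply_mem e
  have hsq : ‖a‖ ^ 2 ≤ √c * ‖a‖ * ∑ i, |e i| := by
    have horth : ⟪a, e - a⟫ = 0 :=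
      Submodule.inner_right_of_mem_orthogonal ha (K.sub_starProjection_mem_orthogonal e)
    calc ‖a‖ ^ 2 = ⟪a, e⟫ := by
          rw [inner_sub_right, sub_eq_zero] at horth; rw [horth, real_inner_self_eq_norm_sq]
      _ ≤ linfE a * ∑ i, |e i| := inner_le_mul_sum_abs a e
      _ ≤ √c * ‖a‖ * ∑ i, |e i| :=
          mul_le_mul_of_nonneg_right (hK a ha) (Finset.sum_nonneg fun i _ => abs_nonneg _)
  have hnorm : ‖a‖ ≤ √c * ∑ i, |e i| := by
    have hbound : 0 ≤ √c * ∑ i, |e i| :=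
      mul_nonneg (Real.sqrt_nonneg c) (Finset.sum_nonneg fun i _ => abs_nonneg _)
    nlinarith [norm_nonneg a]
  calc linfE a ≤ √c * ‖a‖ := hK a ha
    _ ≤ √c * (√c * ∑ i, |e i|) := mul_le_mul_of_nonneg_left hnorm (Real.sqrt_nonneg c)
    _ = c * ∑ i, |e i| := by rw [← mul_assoc, Real.mul_self_sqrt hc]

end linfE

theorem norm_le_norm_sub_of_inner_eq_zero {F : Type*} [NormedAddCommGroup F]
    [InnerProductSpace ℝ F] {u w : F} (h : ⟪u, w⟫ = 0) : ‖u‖ ≤ ‖u - w‖ := by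
  have := norm_sub_sq_eq_norm_sq_add_norm_sq_real h
  nlinarith [norm_nonneg u, norm_nonneg (u - w), mul_self_nonneg ‖w‖]

theorem norm_sub_fderiv_le_of_lipschitz {E F : Type*} [NormedAddCommGroup E] [NormedSpace ℝ E]
    [NormedAddCommGroup F] [NormedSpace ℝ F] {f : E → F} {f' : E → E →L[ℝ] F} {L : ℝ}
    (hf : ∀ x, HasFDerivAt f (f' x) x) (hL : 0 ≤ L) (hf' : ∀ x y, ‖f' y - f' x‖ ≤ L * ‖y - x‖)
    (x y : E) : ‖f y - f x - f' x (y - x)‖ ≤ L * ‖y - x‖ ^ 2 := by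
  have hy : y ∈ closedBall x ‖y - x‖ := by rw [mem_closedBall, dist_eq_norm]
  have hbound : ∀ z ∈ closedBall x ‖y - x‖, ‖f' z - f' x‖ ≤ L * ‖y - x‖ := fun z hz =>
    (hf' x z).trans (mul_le_mul_of_nonneg_left (by rwa [mem_closedBall, dist_eq_norm] at hz) hL)
  have := (convex_closedBall x ‖y - x‖).norm_image_sub_le_of_norm_hasFDerivWithin_le'
    (fun z _ => (hf z).hasFDerivWithinAt) hbound (mem_closedBall_self (norm_nonneg _)) hy
  rwa [mul_assoc, ← sq] at this

theorem Convex.sub_mem_of_hasFDerivWithinAt {E F : Type*} [NormedAddCommGroup E]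
    [NormedSpace ℝ E] [NormedAddCommGroup F] [InnerProductSpace ℝ F] {K : Submodule ℝ F}
    [K.HasOrthogonalProjection] {f : E → F} {f' : E → E →L[ℝ] F} {s : Set E} (hs : Convex ℝ s)
    (hf : ∀ x ∈ s, HasFDerivWithinAt f (f' x) s x) (hK : ∀ x ∈ s, ∀ v, f' x v ∈ K)
    {x y : E} (hx : x ∈ s) (hy : y ∈ s) : f y - f x ∈ K := by
  rw [← K.orthogonal_orthogonal, Submodule.mem_orthogonal]
  intro w hw
  have hderiv : ∀ z ∈ s, ‖(innerSL ℝ w).comp (f' z)‖ ≤ 0 := fun z hz => by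
    have : (innerSL ℝ w).comp (f' z) = 0 := ContinuousLinearMap.ext fun v =>
      Submodule.inner_left_of_mem_orthogonal (hK z hz v) hw
    simp [this]
  have := hs.norm_image_sub_le_of_norm_hasFDerivWithin_le
    (fun z hz => (innerSL ℝ w).hasFDerivAt.comp_hasFDerivWithinAt z (hf z hz)) hderiv hx hy
  simpa [inner_sub_right, sub_eq_zero] using this

section Adjoint

variable {E F : Type*} [NormedAddCommGroup E] [InnerProductSpace ℝ E] [CompleteSpace E]
  [NormedAddCommGroup F] [InnerProductSpace ℝ F] [CompleteSpace F]

/-- The singular values of `Tᵀ` on `K` lie in `[α, β]` and `Tᵀ` vanishes on `Kᗮ`. -/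
structure AdjointBounds (K : Submodule ℝ F) (α β : ℝ) (T : E →L[ℝ] F) : Prop where
  le_norm_adjoint : ∀ u ∈ K, α * ‖u‖ ≤ ‖T.adjoint u‖
  norm_adjoint_le : ∀ u ∈ K, ‖T.adjoint u‖ ≤ β * ‖u‖
  adjoint_orthogonal : ∀ w ∈ Kᗮ, T.adjoint w = 0

namespace AdjointBounds

variable {K : Submodule ℝ F} {α β : ℝ} {T : E →L[ℝ] F}

theorem of_unit (hunit : ∀ u ∈ K, ‖u‖ = 1 → α ≤ ‖T.adjoint u‖ ∧ ‖T.adjoint u‖ ≤ β)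
    (hnull : ∀ w ∈ Kᗮ, ‖T.adjoint w‖ = 0) : AdjointBounds K α β T := by
  have hscale : ∀ u ∈ K, u ≠ 0 →
      α ≤ ‖u‖⁻¹ * ‖T.adjoint u‖ ∧ ‖u‖⁻¹ * ‖T.adjoint u‖ ≤ β := fun u hu hu0 => by
    have hunit' := hunit (‖u‖⁻¹ • u) (K.smul_mem _ hu) (norm_smul_inv_norm hu0)
    rwa [map_smul, norm_smul, norm_inv, norm_norm] at hunit'
  refine ⟨fun u hu => ?_, fun u hu => ?_, fun w hw => norm_eq_zero.mp (hnull w hw)⟩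
  · rcases eq_or_ne u 0 with rfl | hu0
    · simp
    · rw [mul_comm, ← le_inv_mul_iff₀ (norm_pos_iff.mpr hu0)]
      exact (hscale u hu hu0).1
  · rcases eq_or_ne u 0 with rfl | hu0
    · simp
    · rw [mul_comm, ← inv_mul_le_iff₀ (norm_pos_iff.mpr hu0)]
      exact (hscale u hu hu0).2

theorem apply_mem [K.HasOrthogonalProjection] (hT : AdjointBounds K α β T) (v : E) : T v ∈ K := by
  rw [← K.orthogonal_orthogonal, Submodule.mem_orthogonal]
  intro w hw
  rw [← T.adjoint_inner_left, hT.adjoint_orthogonal w hw, inner_zero_left]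

theorem norm_apply_le [K.HasOrthogonalProjection] (hT : AdjointBounds K α β T) (hβ : 0 ≤ β)
    (v : E) : ‖T v‖ ≤ β * ‖v‖ := by
  have hsq : ‖T v‖ ^ 2 ≤ β * ‖T v‖ * ‖v‖ :=
    calc ‖T v‖ ^ 2 = ⟪T.adjoint (T v), v⟫ := by
          rw [T.adjoint_inner_left, real_inner_self_eq_norm_sq]
      _ ≤ ‖T.adjoint (T v)‖ * ‖v‖ := real_inner_le_norm _ _
      _ ≤ β * ‖T v‖ * ‖v‖ :=
          mul_le_mul_of_nonneg_right (hT.norm_adjoint_le _ (hT.apply_mem v)) (norm_nonneg v)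
  nlinarith [norm_nonneg (T v), norm_nonneg v, mul_nonneg hβ (norm_nonneg v)]

/-- Squaring, `‖z - η T Tᵀ z‖² ≤ ‖z‖² - 2η‖Tᵀz‖² + η²β²‖Tᵀz‖² ≤ ‖z‖² - (3/2)η‖Tᵀz‖²`,
and `α‖z‖ ≤ ‖Tᵀz‖` lets the right-hand side be bounded by a square. -/
theorem norm_sub_smul_apply_adjoint_le [K.HasOrthogonalProjection] (hT : AdjointBounds K α β T)
    (hα : 0 ≤ α) (hαβ : α ≤ β) {η : ℝ} (hη : 0 ≤ η) (hηβ : η * β ^ 2 ≤ 1 / 2) {z : F}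
    (hz : z ∈ K) :
    ‖z - η • T (T.adjoint z)‖ ≤ ‖z‖ - 3 / 4 * η * α * ‖T.adjoint z‖ := by
  set q := ‖T.adjoint z‖
  have hβ : 0 ≤ β := hα.trans hαβ
  have hq : 0 ≤ q := norm_nonneg _
  have hlow : α * ‖z‖ ≤ q := hT.le_norm_adjoint z hz
  have hup : q ≤ β * ‖z‖ := hT.norm_adjoint_le z hz
  have hTT : ‖T (T.adjoint z)‖ ^ 2 ≤ (β * q) ^ 2 :=
    pow_le_pow_left₀ (norm_nonneg _) (hT.norm_apply_le hβ _) 2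
  have hinner : ⟪z, η • T (T.adjoint z)⟫ = η * q ^ 2 := by
    rw [real_inner_smul_right, ← T.adjoint_inner_left, real_inner_self_eq_norm_sq]
  have hsq : ‖z - η • T (T.adjoint z)‖ ^ 2 ≤ ‖z‖ ^ 2 - 3 / 2 * η * q ^ 2 := by
    rw [norm_sub_sq_real, hinner, norm_smul, Real.norm_of_nonneg hη]
    nlinarith [mul_le_mul_of_nonneg_left hTT (sq_nonneg η),
      mul_le_mul_of_nonneg_right hηβ (mul_nonneg hη (sq_nonneg q))]
  have hrhs : 0 ≤ ‖z‖ - 3 / 4 * η * α * q := by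
    have hαq : α * q ≤ β ^ 2 * ‖z‖ := by nlinarith [mul_le_mul_of_nonneg_left hup hβ]
    nlinarith [mul_le_mul_of_nonneg_left hαq hη, norm_nonneg z]
  refine (pow_le_pow_iff_left₀ (norm_nonneg _) hrhs two_ne_zero).mp (hsq.trans ?_)
  nlinarith [mul_le_mul_of_nonneg_left hlow (mul_nonneg hη hq), sq_nonneg (η * α * q)]

end AdjointBounds

end Adjoint

section GradientDescent

variable {E F : Type*} [NormedAddCommGroup E] [InnerProductSpace ℝ E] [CompleteSpace E]
  [NormedAddCommGroup F] [InnerProductSpace ℝ F] [CompleteSpace F]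
  {K : Submodule ℝ F} [K.HasOrthogonalProjection] {f : E → F} {J : E → E →L[ℝ] F}
  {α β L η : ℝ} {y b : F}

/-- The target `b` may be any point with `y - b ∈ Kᗮ`: the Jacobian cannot tell it from `y`. -/
theorem gradient_step_le (hf : ∀ θ, HasFDerivAt f (J θ) θ) (hL : 0 ≤ L)
    (hsmooth : ∀ θ₁ θ₂, ‖J θ₂ - J θ₁‖ ≤ L * ‖θ₂ - θ₁‖) {θ θ' : E}
    (hT : AdjointBounds K α β (J θ)) (hα : 0 ≤ α) (hαβ : α ≤ β) (hη : 0 ≤ η)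
    (hηβ : η * β ^ 2 ≤ 1 / 2) (hb : y - b ∈ Kᗮ) (hz : f θ - b ∈ K)
    (hηL : L * η * β * ‖f θ - b‖ ≤ α / 2) (hθ' : θ' = θ - η • (J θ).adjoint (f θ - y)) :
    ‖f θ' - b‖ + α / 4 * ‖θ' - θ‖ ≤ ‖f θ - b‖ ∧
      ‖f θ' - b‖ ≤ (1 - η * α ^ 2 / 4) * ‖f θ - b‖ := by
  set z := f θ - b
  set g := (J θ).adjoint z
  have hgrad : (J θ).adjoint (f θ - y) = g := by
    rw [show f θ - y = z - (y - b) by simp only [z]; abel, map_sub, hT.adjoint_orthogonal _ hb,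
      sub_zero]
  have hmove : θ' - θ = -(η • g) := by rw [hθ', hgrad]; abel
  have hdist : ‖θ' - θ‖ = η * ‖g‖ := by rw [hmove, norm_neg, norm_smul, Real.norm_of_nonneg hη]
  have hsplit : f θ' - b = (z - η • J θ g) + (f θ' - f θ - J θ (θ' - θ)) := by
    rw [hmove, map_neg, map_smul]; simp only [z]; abel
  have hlin := hT.norm_sub_smul_apply_adjoint_le hα hαβ hη hηβ hz
  have hrem : ‖f θ' - f θ - J θ (θ' - θ)‖ ≤ α / 2 * ‖θ' - θ‖ := by
    have hLg : L * η * ‖g‖ ≤ α / 2 :=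
      (mul_le_mul_of_nonneg_left (hT.norm_adjoint_le z hz) (by positivity)).trans
        (by linarith)
    calc ‖f θ' - f θ - J θ (θ' - θ)‖ ≤ L * ‖θ' - θ‖ ^ 2 :=
          norm_sub_fderiv_le_of_lipschitz hf hL hsmooth θ θ'
      _ = L * η * ‖g‖ * ‖θ' - θ‖ := by rw [sq, hdist]; ring
      _ ≤ α / 2 * ‖θ' - θ‖ := mul_le_mul_of_nonneg_right hLg (norm_nonneg _)
  have hlyap : ‖f θ' - b‖ + α / 4 * ‖θ' - θ‖ ≤ ‖z‖ := by
    have := norm_add_le (z - η • J θ g) (f θ' - f θ - J θ (θ' - θ))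
    rw [← hsplit] at this
    rw [hdist] at hrem ⊢
    linarith
  refine ⟨hlyap, ?_⟩
  have hlow : α * ‖z‖ ≤ ‖g‖ := hT.le_norm_adjoint z hz
  rw [hdist] at hlyap
  nlinarith [mul_le_mul_of_nonneg_left hlow (mul_nonneg hη hα)]

theorem gradient_descent_invariant (hf : ∀ θ, HasFDerivAt f (J θ) θ) (hL : 0 ≤ L)
    (hsmooth : ∀ θ₁ θ₂, ‖J θ₂ - J θ₁‖ ≤ L * ‖θ₂ - θ₁‖) {θ₀ : E} {R : ℝ} (hα : 0 < α)
    (hαβ : α ≤ β) (hη : 0 ≤ η) (hηβ : η * β ^ 2 ≤ 1 / 2) (hηL : L * η * β * R ≤ α / 2)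
    (hT : ∀ θ ∈ closedBall θ₀ (4 * R / α), AdjointBounds K α β (J θ)) (hb : y - b ∈ Kᗮ)
    (h₀ : f θ₀ - b ∈ K) (hR : ‖f θ₀ - b‖ ≤ R) {θseq : ℕ → E} (hθ₀ : θseq 0 = θ₀)
    (hstep : ∀ τ, θseq (τ + 1) = θseq τ - η • (J (θseq τ)).adjoint (f (θseq τ) - y)) (τ : ℕ) :
    f (θseq τ) - b ∈ K ∧ α / 4 * ‖θseq τ - θ₀‖ + ‖f (θseq τ) - b‖ ≤ ‖f θ₀ - b‖ ∧
      ‖f (θseq τ) - b‖ ≤ (1 - η * α ^ 2 / 4) ^ τ * ‖f θ₀ - b‖ := by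
  have hβ : 0 ≤ β := hα.le.trans hαβ
  have hball : ∀ θ r, α / 4 * ‖θ - θ₀‖ + r ≤ ‖f θ₀ - b‖ → 0 ≤ r →
      θ ∈ closedBall θ₀ (4 * R / α) := fun θ r h hr => by
    rw [mem_closedBall, dist_eq_norm, le_div_iff₀ hα]
    linarith
  induction τ with
  | zero => simp [hθ₀, h₀]
  | succ τ ih =>
    obtain ⟨hz, hd, hg⟩ := ih
    have hin := hball _ _ hd (norm_nonneg _)
    have hzR : ‖f (θseq τ) - b‖ ≤ R := by nlinarith [norm_nonneg (θseq τ - θ₀)]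
    obtain ⟨hlyap, hcontr⟩ := gradient_step_le hf hL hsmooth (hT _ hin) hα.le hαβ hη hηβ hb hz
      ((mul_le_mul_of_nonneg_left hzR (by positivity)).trans hηL) (hstep τ)
    have hd' : α / 4 * ‖θseq (τ + 1) - θ₀‖ + ‖f (θseq (τ + 1)) - b‖ ≤ ‖f θ₀ - b‖ := by
      nlinarith [norm_sub_le_norm_sub_add_norm_sub (θseq (τ + 1)) (θseq τ) θ₀]
    have hmem : f (θseq (τ + 1)) - f (θseq τ) ∈ K :=
      (convex_closedBall θ₀ _).sub_mem_of_hasFDerivWithinAt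
        (fun θ _ => (hf θ).hasFDerivWithinAt) (fun θ hθ => (hT θ hθ).apply_mem) hin
        (hball _ _ hd' (norm_nonneg _))
    have hc : 0 ≤ 1 - η * α ^ 2 / 4 := by
      nlinarith [mul_le_mul_of_nonneg_left (pow_le_pow_left₀ hα.le hαβ 2) hη]
    refine ⟨by simpa using K.add_mem hz hmem, hd', ?_⟩
    rw [pow_succ', mul_assoc]
    exact hcontr.trans (mul_le_mul_of_nonneg_left hg hc)

end GradientDescent

theorem step_size_bounds {α β L η R : ℝ} (hα : 0 < α) (hαβ : α ≤ β) (hR : 0 ≤ R) (hη : 0 < η)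
    (hηle : η ≤ 1 / (2 * β ^ 2) * min 1 (α * β / (L * R))) :
    0 < L ∧ 0 < R ∧ η * β ^ 2 ≤ 1 / 2 ∧ L * η * β * R ≤ α / 2 := by
  have hβ : 0 < β := hα.trans_le hαβ
  have hmin : 0 < min 1 (α * β / (L * R)) :=
    pos_of_mul_pos_right (hη.trans_le hηle) (by positivity)
  have hLR : 0 < L * R := (div_pos_iff_of_pos_left (by positivity)).mp (lt_min_iff.mp hmin).2
  have hL : 0 < L := pos_of_mul_pos_left hLR hR
  have hR' : 0 < R := pos_of_mul_pos_right hLR hL.le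
  have hη₁ : η ≤ 1 / (2 * β ^ 2) :=
    hηle.trans (mul_le_of_le_one_right (by positivity) (min_le_left _ _))
  have hη₂ : η ≤ 1 / (2 * β ^ 2) * (α * β / (L * R)) :=
    hηle.trans (mul_le_mul_of_nonneg_left (min_le_right _ _) (by positivity))
  refine ⟨hL, hR', ?_, ?_⟩
  · rw [le_div_iff₀ (by positivity)] at hη₁; linarith
  · rw [div_mul_div_comm, one_mul, le_div_iff₀ (by positivity)] at hη₂; nlinarith

theorem one_sub_pow_mul_le_of_log_div_le {κ R A : ℝ} {τ : ℕ} (hκ : 0 < κ) (hκ₄ : κ ≤ 4)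
    (hR : 0 < R) (hA : 0 < A) (hτ : 5 / κ * Real.log (R / A) ≤ τ) :
    (1 - κ / 4) ^ τ * R ≤ A := by
  have hlog : Real.log (R / A) ≤ κ / 4 * τ := by
    rcases le_total 0 (Real.log (R / A)) with h | h
    · have := mul_le_mul_of_nonneg_left hτ (by positivity : 0 ≤ κ / 4)
      rw [show κ / 4 * (5 / κ * Real.log (R / A)) = 5 / 4 * Real.log (R / A) by
        field_simp] at this
      linarith
    · exact h.trans (by positivity)
  calc (1 - κ / 4) ^ τ * R ≤ Real.exp (-(κ / 4)) ^ τ * R := by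
        gcongr
        · linarith
        · linarith [Real.add_one_le_exp (-(κ / 4))]
    _ = Real.exp (-(κ / 4 * τ)) * R := by rw [← Real.exp_nat_mul]; ring_nf
    _ ≤ Real.exp (-Real.log (R / A)) * R := by gcongr
    _ = A := by rw [Real.exp_neg, Real.exp_log (div_pos hR hA)]; field_simp

theorem gradient_descent_sparse_corruption_diffused_general
    {p n : ℕ} (s : ℕ) (γ : ℝ)
    (f : EuclideanSpace ℝ (Fin p) → EuclideanSpace ℝ (Fin n))
    (J : EuclideanSpace ℝ (Fin p) → (EuclideanSpace ℝ (Fin p) →L[ℝ] EuclideanSpace ℝ (Fin n)))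
    (hJ : ∀ θ, HasFDerivAt f (J θ) θ)
    (y ytil : EuclideanSpace ℝ (Fin n))
    (Splus : Submodule ℝ (EuclideanSpace ℝ (Fin n)))
    (θ0 : EuclideanSpace ℝ (Fin p)) (α β L η : ℝ)
    (hα : 0 < α) (hβ : α ≤ β)
    (hlow : ∀ θ ∈ closedBall θ0 (4 * ‖f θ0 - y‖ / α),
      ∀ u : EuclideanSpace ℝ (Fin n), u ∈ Splus → ‖u‖ = 1 →
        α ≤ ‖(J θ).adjoint u‖ ∧ ‖(J θ).adjoint u‖ ≤ β)
    (hnull : ∀ θ ∈ closedBall θ0 (4 * ‖f θ0 - y‖ / α),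
      ∀ w : EuclideanSpace ℝ (Fin n), w ∈ Splusᗮ → ‖(J θ).adjoint w‖ = 0)
    (hsmooth : ∀ θ1 θ2 : EuclideanSpace ℝ (Fin p), ‖J θ2 - J θ1‖ ≤ L * ‖θ2 - θ1‖)
    (hinit : f θ0 - ytil ∈ Splus)
    (hη : 0 < η) (hηle : η ≤ 1 / (2 * β ^ 2) * min 1 (α * β / (L * ‖f θ0 - y‖)))
    (θseq : ℕ → EuclideanSpace ℝ (Fin p))
    (hθ0 : θseq 0 = θ0)
    (hstep : ∀ τ : ℕ, θseq (τ + 1) = θseq τ - η • (J (θseq τ)).adjoint (f (θseq τ) - y))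
    -- the corruption e = y − ỹ has at most s nonzero entries
    (hsparse : (Finset.univ.filter fun i : Fin n => (y - ytil) i ≠ 0).card ≤ s)
    -- S₊ is γ-diffused
    (hdiffuse : ∀ u : EuclideanSpace ℝ (Fin n), u ∈ Splus →
      linfE u ≤ Real.sqrt (γ / n) * ‖u‖)
    (hproj : 0 < linfE (Splus.orthogonalProjection (y - ytil) : EuclideanSpace ℝ (Fin n))) :
    ∀ τ : ℕ,
      5 / (η * α ^ 2) *
          Real.log (‖f θ0 - y‖ /
            linfE (Splus.orthogonalProjection (y - ytil) : EuclideanSpace ℝ (Fin n))) ≤ (τ : ℝ) →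
      linfE (f (θseq τ) - ytil) ≤
          2 * linfE (Splus.orthogonalProjection (y - ytil) : EuclideanSpace ℝ (Fin n)) ∧
        2 * linfE (Splus.orthogonalProjection (y - ytil) : EuclideanSpace ℝ (Fin n)) ≤
          2 * γ * Real.sqrt s / n * ‖y - ytil‖ := by
  obtain ⟨hL, hR, hηβ, hηL⟩ := step_size_bounds hα hβ (norm_nonneg _) hη hηle
  set e := y - ytil
  set a : EuclideanSpace ℝ (Fin n) := Splus.starProjection e
  have ha : a ∈ Splus := Splus.starProjection_apply_mem e
  have hb : y - (ytil + a) ∈ Splusᗮ := by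
    rw [← sub_sub]; exact Splus.sub_starProjection_mem_orthogonal e
  have h₀ : f θ0 - (ytil + a) ∈ Splus := by rw [← sub_sub]; exact Splus.sub_mem hinit ha
  have hR₀ : ‖f θ0 - (ytil + a)‖ ≤ ‖f θ0 - y‖ := by
    simpa using norm_le_norm_sub_of_inner_eq_zero (Submodule.inner_right_of_mem_orthogonal h₀ hb)
  have hA : 0 < linfE a := hproj
  have hκ : η * α ^ 2 ≤ 4 := by nlinarith [pow_le_pow_left₀ hα.le hβ 2]
  intro τ hτ
  show linfE _ ≤ 2 * linfE a ∧ 2 * linfE a ≤ _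
  have hdecay := (gradient_descent_invariant hJ hL.le hsmooth hα hβ hη.le hηβ hηL
    (fun θ hθ => .of_unit (hlow θ hθ) (hnull θ hθ)) hb h₀ hR₀ hθ0 hstep τ).2.2
  have hres : ‖f (θseq τ) - (ytil + a)‖ ≤ linfE a :=
    hdecay.trans <| (mul_le_mul_of_nonneg_left hR₀ (pow_nonneg (by linarith) τ)).trans <|
      one_sub_pow_mul_le_of_log_div_le (by positivity) hκ hR hA hτ
  have hγ : 0 ≤ γ / n := by
    by_contra h
    have := hdiffuse a ha
    rw [Real.sqrt_eq_zero_of_nonpos (le_of_not_ge h), zero_mul] at this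
    exact hA.not_ge this
  constructor
  · calc linfE (f (θseq τ) - ytil) = linfE ((f (θseq τ) - (ytil + a)) + a) := by congr 1; abel
      _ ≤ ‖f (θseq τ) - (ytil + a)‖ + linfE a :=
          (linfE.add_le _ _).trans (by gcongr; exact linfE.le_norm _)
      _ ≤ 2 * linfE a := by linarith
  · calc 2 * linfE a ≤ 2 * (γ / n * ∑ i, |e i|) := by
          gcongr; exact linfE.starProjection_le_mul_sum_abs Splus hγ hdiffuse e
      _ ≤ 2 * (γ / n * (Real.sqrt s * ‖e‖)) := by
          gcongr; exact sum_abs_le_sqrt_card_support_mul_norm e hsparse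
      _ = 2 * γ * Real.sqrt s / n * ‖e‖ := by ring

/-- Meta-theorem, sparse corruption on a γ-diffused signal subspace. -/
theorem gradient_descent_sparse_corruption_diffused
    {p n : ℕ} (s : ℕ) (γ : ℝ)
    (f : EuclideanSpace ℝ (Fin p) → EuclideanSpace ℝ (Fin n))
    (J : EuclideanSpace ℝ (Fin p) → (EuclideanSpace ℝ (Fin p) →L[ℝ] EuclideanSpace ℝ (Fin n)))
    (hJ : ∀ θ, HasFDerivAt f (J θ) θ)
    (y ytil : EuclideanSpace ℝ (Fin n))
    (Splus : Submodule ℝ (EuclideanSpace ℝ (Fin n)))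
    (θ0 : EuclideanSpace ℝ (Fin p)) (α β L η : ℝ)
    (hα : 0 < α) (hβ : α ≤ β) (hL : 0 < L)
    (hlow : ∀ θ ∈ closedBall θ0 (4 * ‖f θ0 - y‖ / α),
      ∀ u : EuclideanSpace ℝ (Fin n), u ∈ Splus → ‖u‖ = 1 →
        α ≤ ‖(J θ).adjoint u‖ ∧ ‖(J θ).adjoint u‖ ≤ β)
    (hnull : ∀ θ ∈ closedBall θ0 (4 * ‖f θ0 - y‖ / α),
      ∀ w : EuclideanSpace ℝ (Fin n), w ∈ Splusᗮ → ‖(J θ).adjoint w‖ = 0)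
    (hsmooth : ∀ θ1 θ2 : EuclideanSpace ℝ (Fin p), ‖J θ2 - J θ1‖ ≤ L * ‖θ2 - θ1‖)
    (hinit : f θ0 - ytil ∈ Splus)
    (hη : 0 < η) (hηle : η ≤ 1 / (2 * β ^ 2) * min 1 (α * β / (L * ‖f θ0 - y‖)))
    (θseq : ℕ → EuclideanSpace ℝ (Fin p))
    (hθ0 : θseq 0 = θ0)
    (hstep : ∀ τ : ℕ, θseq (τ + 1) = θseq τ - η • (J (θseq τ)).adjoint (f (θseq τ) - y))
    -- the corruption e = y − ỹ has at most s nonzero entries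
    (hsparse : (Finset.univ.filter fun i : Fin n => (y - ytil) i ≠ 0).card ≤ s)
    -- S₊ is γ-diffused
    (hdiffuse : ∀ u : EuclideanSpace ℝ (Fin n), u ∈ Splus →
      linfE u ≤ Real.sqrt (γ / n) * ‖u‖)
    (hproj : 0 < linfE (Splus.orthogonalProjection (y - ytil) : EuclideanSpace ℝ (Fin n))) :
    ∀ τ : ℕ,
      5 / (η * α ^ 2) *
          Real.log (‖f θ0 - y‖ /
            linfE (Splus.orthogonalProjection (y - ytil) : EuclideanSpace ℝ (Fin n))) ≤ (τ : ℝ) →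
      linfE (f (θseq τ) - ytil) ≤
          2 * linfE (Splus.orthogonalProjection (y - ytil) : EuclideanSpace ℝ (Fin n)) ∧
        2 * linfE (Splus.orthogonalProjection (y - ytil) : EuclideanSpace ℝ (Fin n)) ≤
          2 * γ * Real.sqrt s / n * ‖y - ytil‖ :=
  gradient_descent_sparse_corruption_diffused_general s γ f J hJ y ytil Splus θ0 α β L η hα hβ hlow
    hnull hsmooth hinit hη hηle θseq hθ0 hstep hsparse hdiffuse hproj
end
end

section
/- Let x_1, x_2 ∈ R^d be unit Euclidean norm vectors, let φ satisfy |φ'(z)| ≤ Γ and |φ''(z)| ≤ Γ for all z, let v ∈ R^k have entries ±1/√k, and suppose k ≥ c·d. Let W_0 ∈ R^{k×d} satisfy ‖W_0‖ ≤ 2(√k + √d), and let W ∈ R^{k×d} satisfy ‖W − W_0‖_F ≤ c̃·√k. Then there is a constant C (depending only on c, c̃) such that |(f(W, x_2) − f(W_0, x_2)) − (f(W, x_1) − f(W_0, x_1))| ≤ C·Γ·‖x_2 − x_1‖₂·‖W − W_0‖, where ‖W − W_0‖ is the spectral norm. -/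
open MeasureTheory ProbabilityTheory Real
open scoped BigOperators ENNReal Classical

noncomputable section

def l2 {ι : Type*} [Fintype ι] (v : ι → ℝ) : ℝ := Real.sqrt (∑ i, v i ^ 2)

def linf {ι : Type*} [Fintype ι] (v : ι → ℝ) : ℝ := ⨆ i, |v i|

def frob {ι κ : Type*} [Fintype ι] [Fintype κ] (M : ι → κ → ℝ) : ℝ :=
  Real.sqrt (∑ i, ∑ j, M i j ^ 2)

def spec {ι κ : Type*} [Fintype ι] [Fintype κ] (M : ι → κ → ℝ) : ℝ :=
  sSup {r | ∃ v : κ → ℝ, l2 v ≤ 1 ∧ r = l2 fun i => ∑ j, M i j * v j}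

def nnet {k d : ℕ} (φ : ℝ → ℝ) (v : Fin k → ℝ) (W : Fin k → Fin d → ℝ) (x : Fin d → ℝ) : ℝ :=
  ∑ ℓ, v ℓ * φ (∑ j, W ℓ j * x j)

def halfHalf {k : ℕ} (v : Fin k → ℝ) : Prop :=
  (∀ ℓ, v ℓ = 1 / Real.sqrt k ∨ v ℓ = -(1 / Real.sqrt k)) ∧
    2 * (Finset.univ.filter fun ℓ => v ℓ = 1 / Real.sqrt k).card = k

def gaussW (k d : ℕ) : Measure (Fin k → Fin d → ℝ) :=
  Measure.pi fun _ => Measure.pi fun _ => gaussianReal 0 1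

def gaussVec (d : ℕ) : Measure (Fin d → ℝ) := Measure.pi fun _ => gaussianReal 0 1

def nnCov {K d : ℕ} (φ : ℝ → ℝ) (C : Fin K → Fin d → ℝ) : Fin K → Fin K → ℝ := fun a b =>
  (∑ t, C a t * C b t) *
    ∫ g, deriv φ (∑ t, C a t * g t) * deriv φ (∑ t, C b t * g t) ∂ gaussVec d

def lamMin {K d : ℕ} (φ : ℝ → ℝ) (C : Fin K → Fin d → ℝ) : ℝ :=
  sInf {r | ∃ u : Fin K → ℝ, l2 u = 1 ∧ r = ∑ a, ∑ b, u a * nnCov φ C a b * u b}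

structure Clusterable (n K Kbar d : ℕ) (ε0 δ clow cup : ℝ)
    (x : Fin n → Fin d → ℝ) (c : Fin K → Fin d → ℝ)
    (assign : Fin n → Fin K) (α : Fin Kbar → ℝ) (cls : Fin K → Fin Kbar) : Prop where
  center_norm : ∀ ℓ, l2 (c ℓ) = 1
  x_norm : ∀ i, l2 (x i) = 1
  x_close : ∀ i, l2 (fun j => x i j - c (assign i) j) ≤ ε0
  bal_low : ∀ ℓ : Fin K, clow * n / K ≤ ((Finset.univ.filter fun i => assign i = ℓ).card : ℝ)
  bal_up : ∀ ℓ : Fin K, ((Finset.univ.filter fun i => assign i = ℓ).card : ℝ) ≤ cup * n / K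
  KbarleK : Kbar ≤ K
  α_mem : ∀ r, α r ∈ Set.Icc (-1 : ℝ) 1
  α_sep : ∀ r s, r ≠ s → δ ≤ |α r - α s|
  c_sep : ∀ ℓ ℓ', cls ℓ ≠ cls ℓ' → 2 * ε0 ≤ l2 (fun j => c ℓ j - c ℓ' j)

structure Corrupted (n K Kbar : ℕ) (ρ : ℝ) (assign : Fin n → Fin K)
    (α : Fin Kbar → ℝ) (cls : Fin K → Fin Kbar) (y : Fin n → ℝ) : Prop where
  inRange : ∀ i, ∃ r, y i = α r
  fewErrors : ∀ ℓ : Fin K,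
    ((Finset.univ.filter fun i => assign i = ℓ ∧ y i ≠ α (cls ℓ)).card : ℝ) ≤
      ρ * ((Finset.univ.filter fun i => assign i = ℓ).card : ℝ)

def gradL {n k d : ℕ} (φ : ℝ → ℝ) (v : Fin k → ℝ) (x : Fin n → Fin d → ℝ) (y : Fin n → ℝ)
    (W : Fin k → Fin d → ℝ) : Fin k → Fin d → ℝ := fun ℓ j =>
  ∑ i, (nnet φ v W (x i) - y i) * v ℓ * deriv φ (∑ t, W ℓ t * x i t) * x i j

def gdIter {n k d : ℕ} (η : ℝ) (φ : ℝ → ℝ) (v : Fin k → ℝ) (x : Fin n → Fin d → ℝ)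
    (y : Fin n → ℝ) (W0 : Fin k → Fin d → ℝ) : ℕ → Fin k → Fin d → ℝ
  | 0 => W0
  | τ + 1 => gdIter η φ v x y W0 τ - η • gradL φ v x y (gdIter η φ v x y W0 τ)

/-! Write `Δ = W - W₀` and, for the hidden unit `ℓ`, `aᵢ = (W₀ xᵢ)_ℓ`, `bᵢ = (Δ xᵢ)_ℓ`. The
contribution of unit `ℓ` is `(φ(a₂ + b₂) - φ a₂) - (φ(a₁ + b₁) - φ a₁)
= (φ(a₂ + b₂) - φ(a₂ + b₁)) + (h a₂ - h a₁)` with `h a = φ(a + b₁) - φ a`; since `|h'| ≤ Γ |b₁|`,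
two mean value estimates bound it by `Γ |b₂ - b₁| + Γ |b₁| |a₂ - a₁|`. Summing with weights
`1/√k` and using Cauchy–Schwarz over the units gives the bound `Γ ‖x₂ - x₁‖ ‖Δ‖ (1 + ‖W₀‖/√k)`, and
`‖W₀‖/√k ≤ 2 (1 + 1/√c)` once `k ≥ c d`. -/

open Matrix

section Norms

variable {ι κ : Type*} [Fintype ι] [Fintype κ]

lemma l2_nonneg (u : ι → ℝ) : 0 ≤ l2 u := Real.sqrt_nonneg _

lemma l2_smul (a : ℝ) (u : ι → ℝ) : l2 (a • u) = |a| * l2 u := by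
  simp only [l2, Pi.smul_apply, smul_eq_mul, mul_pow, ← Finset.mul_sum, Real.sqrt_mul (sq_nonneg a),
    Real.sqrt_sq_eq_abs]

lemma eq_zero_of_l2_eq_zero {u : ι → ℝ} (h : l2 u = 0) : u = 0 := by
  rw [l2, Real.sqrt_eq_zero (Finset.sum_nonneg fun i _ => sq_nonneg (u i)),
    Finset.sum_eq_zero_iff_of_nonneg fun i _ => sq_nonneg (u i)] at h
  funext i
  exact pow_eq_zero_iff two_ne_zero |>.mp (h i (Finset.mem_univ i))

lemma sum_abs_mul_abs_le_l2_mul_l2 (u w : ι → ℝ) : ∑ i, |u i| * |w i| ≤ l2 u * l2 w := by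
  simpa only [l2, sq_abs] using Real.sum_mul_le_sqrt_mul_sqrt Finset.univ (|u ·|) (|w ·|)

lemma sum_abs_le_sqrt_card_mul_l2 (u : ι → ℝ) :
    ∑ i, |u i| ≤ Real.sqrt (Fintype.card ι) * l2 u := by
  simpa [l2, mul_comm] using Real.sum_mul_le_sqrt_mul_sqrt Finset.univ (|u ·|) (fun _ => 1)

lemma l2_mulVec_le_frob (M : Matrix ι κ ℝ) {u : κ → ℝ} (hu : l2 u ≤ 1) :
    l2 (M *ᵥ u) ≤ frob M := by
  refine Real.sqrt_le_sqrt (Finset.sum_le_sum fun i _ => ?_)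
  calc (M *ᵥ u) i ^ 2 ≤ (∑ j, M i j ^ 2) * ∑ j, u j ^ 2 := Finset.sum_mul_sq_le_sq_mul_sq _ _ _
    _ ≤ ∑ j, M i j ^ 2 := by
      refine mul_le_of_le_one_right (Finset.sum_nonneg fun j _ => sq_nonneg _) ?_
      rwa [l2, Real.sqrt_le_one] at hu

lemma spec_bddAbove (M : Matrix ι κ ℝ) :
    BddAbove {r | ∃ u : κ → ℝ, l2 u ≤ 1 ∧ r = l2 fun i => ∑ j, M i j * u j} := by
  refine ⟨frob M, ?_⟩
  rintro r ⟨u, hu, rfl⟩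
  exact l2_mulVec_le_frob M hu

lemma l2_mulVec_le_spec_of_l2_le_one (M : Matrix ι κ ℝ) {u : κ → ℝ} (hu : l2 u ≤ 1) :
    l2 (M *ᵥ u) ≤ spec M :=
  le_csSup (spec_bddAbove M) ⟨u, hu, rfl⟩

lemma spec_nonneg (M : Matrix ι κ ℝ) : 0 ≤ spec M :=
  (l2_nonneg _).trans (l2_mulVec_le_spec_of_l2_le_one M (u := 0) (by simp [l2]))

lemma l2_mulVec_le_spec_mul_l2 (M : Matrix ι κ ℝ) (u : κ → ℝ) :
    l2 (M *ᵥ u) ≤ spec M * l2 u := by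
  rcases (l2_nonneg u).eq_or_lt with hu | hu
  · simp [eq_zero_of_l2_eq_zero hu.symm, l2]
  · have hunit : l2 ((l2 u)⁻¹ • u) ≤ 1 := by
      rw [l2_smul, abs_of_pos (inv_pos.mpr hu), inv_mul_cancel₀ hu.ne']
    have := l2_mulVec_le_spec_of_l2_le_one M hunit
    rwa [mulVec_smul, l2_smul, abs_of_pos (inv_pos.mpr hu), inv_mul_le_iff₀ hu, mul_comm] at this

end Norms

lemma abs_sub_le_mul_abs_sub_of_abs_deriv_le {f : ℝ → ℝ} {C : ℝ} (hf : Differentiable ℝ f)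
    (hC : ∀ z, |deriv f z| ≤ C) (a b : ℝ) : |f a - f b| ≤ C * |a - b| := by
  simpa only [Real.norm_eq_abs] using Convex.norm_image_sub_le_of_norm_deriv_le
    (fun z _ => hf z) (fun z _ => hC z) convex_univ (Set.mem_univ b) (Set.mem_univ a)

lemma abs_sub_sub_sub_le {φ : ℝ → ℝ} {Γ : ℝ} (hφ : ContDiff ℝ 2 φ)
    (hd1 : ∀ z, |deriv φ z| ≤ Γ) (hd2 : ∀ z, |deriv (deriv φ) z| ≤ Γ) (a₁ a₂ b₁ b₂ : ℝ) :
    |(φ (a₂ + b₂) - φ a₂) - (φ (a₁ + b₁) - φ a₁)| ≤ Γ * |b₂ - b₁| + Γ * |b₁| * |a₂ - a₁| := by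
  have hφd : Differentiable ℝ φ := hφ.differentiable two_ne_zero
  have hφ'd : Differentiable ℝ (deriv φ) := hφ.differentiable_deriv_two
  have hb : |φ (a₂ + b₂) - φ (a₂ + b₁)| ≤ Γ * |b₂ - b₁| := by
    simpa only [add_sub_add_left_eq_sub] using
      abs_sub_le_mul_abs_sub_of_abs_deriv_le hφd hd1 (a₂ + b₂) (a₂ + b₁)
  have ha : |(φ (a₂ + b₁) - φ a₂) - (φ (a₁ + b₁) - φ a₁)| ≤ Γ * |b₁| * |a₂ - a₁| := by
    have hderiv (a : ℝ) : HasDerivAt (fun a => φ (a + b₁) - φ a) (deriv φ (a + b₁) - deriv φ a) a :=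
      ((hφd _).hasDerivAt.comp_add_const a b₁).sub (hφd a).hasDerivAt
    refine abs_sub_le_mul_abs_sub_of_abs_deriv_le (fun a => (hderiv a).differentiableAt)
      (fun a => ?_) a₂ a₁
    simpa [(hderiv a).deriv] using abs_sub_le_mul_abs_sub_of_abs_deriv_le hφ'd hd2 (a + b₁) a
  calc _ = |(φ (a₂ + b₂) - φ (a₂ + b₁)) + ((φ (a₂ + b₁) - φ a₂) - (φ (a₁ + b₁) - φ a₁))| := by
        ring_nf
    _ ≤ _ := (abs_add_le _ _).trans (add_le_add hb ha)

lemma nnet_sub_nnet {k d : ℕ} (φ : ℝ → ℝ) (v : Fin k → ℝ) (W₀ W : Fin k → Fin d → ℝ)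
    (x : Fin d → ℝ) :
    nnet φ v W x - nnet φ v W₀ x =
      ∑ ℓ, v ℓ * (φ ((W₀ *ᵥ x) ℓ + ((W - W₀) *ᵥ x) ℓ) - φ ((W₀ *ᵥ x) ℓ)) := by
  unfold nnet
  rw [← Finset.sum_sub_distrib]
  refine Finset.sum_congr rfl fun ℓ _ => ?_
  have hW : ∑ j, W ℓ j * x j = (W₀ *ᵥ x) ℓ + ((W - W₀) *ᵥ x) ℓ := by
    simp [mulVec, dotProduct, sub_mul]
  rw [hW, mul_sub]
  rfl

lemma abs_nnet_sub_sub_le {k d : ℕ} {φ : ℝ → ℝ} {Γ ν : ℝ} {v : Fin k → ℝ}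
    {x₁ x₂ : Fin d → ℝ} {W₀ W : Fin k → Fin d → ℝ} (hφ : ContDiff ℝ 2 φ)
    (hd1 : ∀ z, |deriv φ z| ≤ Γ) (hd2 : ∀ z, |deriv (deriv φ) z| ≤ Γ)
    (hν : 0 ≤ ν) (hv : ∀ ℓ, |v ℓ| ≤ ν) (hx₁ : l2 x₁ ≤ 1) :
    |(nnet φ v W x₂ - nnet φ v W₀ x₂) - (nnet φ v W x₁ - nnet φ v W₀ x₁)| ≤
      ν * Γ * (Real.sqrt k + spec W₀) * l2 (x₂ - x₁) * spec (W - W₀) := by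
  set Δ := W - W₀
  set P := W₀ *ᵥ (x₂ - x₁)
  set D := Δ *ᵥ (x₂ - x₁)
  set Q := Δ *ᵥ x₁
  have hΓ : 0 ≤ Γ := (abs_nonneg _).trans (hd1 0)
  have hunit (ℓ : Fin k) :
      |v ℓ * ((φ ((W₀ *ᵥ x₂) ℓ + (Δ *ᵥ x₂) ℓ) - φ ((W₀ *ᵥ x₂) ℓ)) -
        (φ ((W₀ *ᵥ x₁) ℓ + (Δ *ᵥ x₁) ℓ) - φ ((W₀ *ᵥ x₁) ℓ)))| ≤
        ν * (Γ * |D ℓ| + Γ * |Q ℓ| * |P ℓ|) := by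
    rw [abs_mul]
    refine mul_le_mul (hv ℓ) ?_ (abs_nonneg _) hν
    have hD : D ℓ = (Δ *ᵥ x₂) ℓ - (Δ *ᵥ x₁) ℓ := by simp [D, mulVec, dotProduct, mul_sub]
    have hP : P ℓ = (W₀ *ᵥ x₂) ℓ - (W₀ *ᵥ x₁) ℓ := by simp [P, mulVec, dotProduct, mul_sub]
    simpa [hD, hP] using abs_sub_sub_sub_le hφ hd1 hd2
      ((W₀ *ᵥ x₁) ℓ) ((W₀ *ᵥ x₂) ℓ) ((Δ *ᵥ x₁) ℓ) ((Δ *ᵥ x₂) ℓ)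
  have hD : ∑ ℓ, |D ℓ| ≤ Real.sqrt k * (spec Δ * l2 (x₂ - x₁)) := by
    simpa using (sum_abs_le_sqrt_card_mul_l2 D).trans
      (mul_le_mul_of_nonneg_left (l2_mulVec_le_spec_mul_l2 Δ _) (Real.sqrt_nonneg _))
  have hQ : l2 Q ≤ spec Δ :=
    (l2_mulVec_le_spec_mul_l2 Δ x₁).trans (mul_le_of_le_one_right (spec_nonneg Δ) hx₁)
  have hQP : ∑ ℓ, |Q ℓ| * |P ℓ| ≤ spec Δ * (spec W₀ * l2 (x₂ - x₁)) :=
    (sum_abs_mul_abs_le_l2_mul_l2 Q P).trans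
      (mul_le_mul hQ (l2_mulVec_le_spec_mul_l2 W₀ _) (l2_nonneg _) (spec_nonneg Δ))
  rw [nnet_sub_nnet, nnet_sub_nnet, ← Finset.sum_sub_distrib]
  calc _ ≤ ∑ ℓ, ν * (Γ * |D ℓ| + Γ * |Q ℓ| * |P ℓ|) :=
        (Finset.abs_sum_le_sum_abs _ _).trans
          (Finset.sum_le_sum fun ℓ _ => by rw [← mul_sub]; exact hunit ℓ)
    _ = ν * Γ * (∑ ℓ, |D ℓ| + ∑ ℓ, |Q ℓ| * |P ℓ|) := by
        rw [← Finset.sum_add_distrib, Finset.mul_sum]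
        exact Finset.sum_congr rfl fun ℓ _ => by ring
    _ ≤ ν * Γ * (Real.sqrt k * (spec Δ * l2 (x₂ - x₁)) + spec Δ * (spec W₀ * l2 (x₂ - x₁))) := by
        gcongr
    _ = _ := by ring

lemma one_div_sqrt_mul_sqrt_add_le {c s : ℝ} {d k : ℕ} (hc : 0 < c) (hkd : c * d ≤ k)
    (hs : s ≤ 2 * (Real.sqrt k + Real.sqrt d)) :
    1 / Real.sqrt k * (Real.sqrt k + s) ≤ 3 + 2 / Real.sqrt c := by
  have hsc : 0 < Real.sqrt c := Real.sqrt_pos.mpr hc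
  rcases Nat.eq_zero_or_pos k with rfl | hk
  · simp only [Nat.cast_zero, Real.sqrt_zero, div_zero, zero_mul]
    positivity
  have hsk : 0 < Real.sqrt k := Real.sqrt_pos.mpr (Nat.cast_pos.mpr hk)
  have hd : Real.sqrt d ≤ Real.sqrt k / Real.sqrt c := by
    rw [le_div_iff₀ hsc, ← Real.sqrt_mul (Nat.cast_nonneg d), mul_comm]
    exact Real.sqrt_le_sqrt hkd
  rw [one_div, inv_mul_le_iff₀ hsk]
  calc Real.sqrt k + s ≤ Real.sqrt k + 2 * (Real.sqrt k + Real.sqrt k / Real.sqrt c) := by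
        linarith
    _ = Real.sqrt k * (3 + 2 / Real.sqrt c) := by ring

theorem output_difference_perturbation_general
    (c ctil : ℝ) (hc : 0 < c) :
    ∃ C : ℝ, 0 < C ∧
      ∀ (d k : ℕ) (Γ : ℝ) (φ : ℝ → ℝ) (v : Fin k → ℝ)
        (x1 x2 : Fin d → ℝ) (W0 W : Fin k → Fin d → ℝ),
        ContDiff ℝ 2 φ →
        (∀ z, |deriv φ z| ≤ Γ) → (∀ z, |deriv (deriv φ) z| ≤ Γ) →
        (∀ ℓ, v ℓ = 1 / Real.sqrt k ∨ v ℓ = -(1 / Real.sqrt k)) →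
        l2 x1 = 1 → l2 x2 = 1 →
        c * d ≤ k →
        spec W0 ≤ 2 * (Real.sqrt k + Real.sqrt d) →
        frob (W - W0) ≤ ctil * Real.sqrt k →
        |(nnet φ v W x2 - nnet φ v W0 x2) - (nnet φ v W x1 - nnet φ v W0 x1)| ≤
          C * Γ * l2 (fun j => x2 j - x1 j) * spec (W - W0) := by
  refine ⟨3 + 2 / Real.sqrt c, by positivity, ?_⟩
  intro d k Γ φ v x1 x2 W0 W hφ hd1 hd2 hv hx1 _ hkd hW0 _
  have hΓ : 0 ≤ Γ := (abs_nonneg _).trans (hd1 0)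
  have hv_abs (ℓ : Fin k) : |v ℓ| ≤ 1 / Real.sqrt k := by
    rcases hv ℓ with h | h <;> simp [h, abs_of_nonneg (Real.sqrt_nonneg _)]
  set E := l2 (fun j => x2 j - x1 j)
  calc _ ≤ 1 / Real.sqrt k * Γ * (Real.sqrt k + spec W0) * E * spec (W - W0) :=
        abs_nnet_sub_sub_le hφ hd1 hd2 (by positivity) hv_abs hx1.le
    _ = (1 / Real.sqrt k * (Real.sqrt k + spec W0)) * (Γ * E * spec (W - W0)) := by ring
    _ ≤ (3 + 2 / Real.sqrt c) * (Γ * E * spec (W - W0)) := by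
        have := mul_nonneg (mul_nonneg hΓ (l2_nonneg (x2 - x1))) (spec_nonneg (W - W0))
        gcongr
        exact one_div_sqrt_mul_sqrt_add_le hc hkd hW0
    _ = _ := by ring

/-- Deterministic perturbation bound on the change of the output
difference at two nearby inputs, for weights near a bounded initialization. -/
theorem output_difference_perturbation
    (c ctil : ℝ) (hc : 0 < c) (hctil : 0 < ctil) :
    ∃ C : ℝ, 0 < C ∧
      ∀ (d k : ℕ) (Γ : ℝ) (φ : ℝ → ℝ) (v : Fin k → ℝ)
        (x1 x2 : Fin d → ℝ) (W0 W : Fin k → Fin d → ℝ),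
        ContDiff ℝ 2 φ →
        (∀ z, |deriv φ z| ≤ Γ) → (∀ z, |deriv (deriv φ) z| ≤ Γ) →
        (∀ ℓ, v ℓ = 1 / Real.sqrt k ∨ v ℓ = -(1 / Real.sqrt k)) →
        l2 x1 = 1 → l2 x2 = 1 →
        c * d ≤ k →
        spec W0 ≤ 2 * (Real.sqrt k + Real.sqrt d) →
        frob (W - W0) ≤ ctil * Real.sqrt k →
        |(nnet φ v W x2 - nnet φ v W0 x2) - (nnet φ v W x1 - nnet φ v W0 x1)| ≤
          C * Γ * l2 (fun j => x2 j - x1 j) * spec (W - W0) :=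
  output_difference_perturbation_general c ctil hc
end
end
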